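/- For the dyad of Rössler systems coupled via the variable x with coupling strength ρ, let Φ : ℝ⁶ → ℝ⁶ be the observability map obtained by measuring y at both nodes, namely Φ = (y₁, L_F y₁, L_F² y₁, y₂, L_F y₂, L_F² y₂). Then the observability determinant det DΦ(p) equals 1 at every point p ∈ ℝ⁶; in particular the dyad is fully observable from measuring y at each node, independently of the value of ρ. -/

import Mathlib

/-- The `k`-th Lie derivative of a scalar function `h` along a vector field `F`. -/
noncomputable def lieD {E : Type*} [NormedAddCommGroup E] [NormedSpace ℝ E]
    (F : E → E) (k : ℕ) (h : E → ℝ) : E → ℝ :=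
  match k with
  | 0 => h
  | k + 1 => fun p => fderiv ℝ (lieD F k h) p (F p)

/-- The observability determinant of a map `Φ` at a point `p`:
the determinant of the Jacobian (Fréchet derivative) of `Φ` at `p`. -/
noncomputable def obsDet {E : Type*} [NormedAddCommGroup E] [NormedSpace ℝ E]
    (Φ : E → E) (p : E) : ℝ :=
  LinearMap.det ((fderiv ℝ Φ p).toLinearMap)

/-- The Rössler vector field with parameters `a b c`, coordinates `(x, y, z)`. -/
def rossler (a b c : ℝ) (p : Fin 3 → ℝ) : Fin 3 → ℝ :=
  ![-p 1 - p 2, p 0 + a * p 1, b + p 2 * (p 0 - c)]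

/-- Dyad of Rössler systems coupled via the variable `x` with coupling strength `ρ`;
coordinates `(x₁, y₁, z₁, x₂, y₂, z₂)`. -/
def dyadX (a b c ρ : ℝ) (p : Fin 6 → ℝ) : Fin 6 → ℝ :=
  ![-p 1 - p 2 + ρ * (p 3 - p 0),
    p 0 + a * p 1,
    b + p 2 * (p 0 - c),
    -p 4 - p 5 + ρ * (p 0 - p 3),
    p 3 + a * p 4,
    b + p 5 * (p 3 - c)]

/-- Observability map measuring `y` at both nodes:
`Φ = (y₁, L_F y₁, L_F² y₁, y₂, L_F y₂, L_F² y₂)`. -/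
noncomputable def PhiY3Y3 (F : (Fin 6 → ℝ) → (Fin 6 → ℝ)) (q : Fin 6 → ℝ) : Fin 6 → ℝ :=
  ![lieD F 0 (fun r => r 1) q,
    lieD F 1 (fun r => r 1) q,
    lieD F 2 (fun r => r 1) q,
    lieD F 0 (fun r => r 4) q,
    lieD F 1 (fun r => r 4) q,
    lieD F 2 (fun r => r 4) q]


def Mx (a ρ : ℝ) : Matrix (Fin 6) (Fin 6) ℝ :=
  !![0, 1, 0, 0, 0, 0;
     1, a, 0, 0, 0, 0;
     a - ρ, a * a - 1, -1, ρ, 0, 0;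
     0, 0, 0, 0, 1, 0;
     0, 0, 0, 1, a, 0;
     ρ, 0, 0, a - ρ, a * a - 1, -1]

@[simp] lemma cons_val_five' {α : Type*} (x : α) (u : Fin 5 → α) :
    Matrix.vecCons x u (5 : Fin 6) = u 4 := rfl

lemma fderiv_proj (i : Fin 6) (q : Fin 6 → ℝ) :
    fderiv ℝ (fun r : Fin 6 → ℝ => r i) q = ContinuousLinearMap.proj i :=
  (ContinuousLinearMap.proj i : (Fin 6 → ℝ) →L[ℝ] ℝ).fderiv

lemma lieD1_y1 (a b c ρ : ℝ) :
    lieD (dyadX a b c ρ) 1 (fun r => r 1) = fun q => q 0 + a * q 1 := by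
  funext q
  simp [lieD, fderiv_proj, dyadX]

lemma lieD1_y2 (a b c ρ : ℝ) :
    lieD (dyadX a b c ρ) 1 (fun r => r 4) = fun q => q 3 + a * q 4 := by
  funext q
  simp [lieD, fderiv_proj, dyadX]

lemma fderiv_comb (a : ℝ) (i j : Fin 6) (q : Fin 6 → ℝ) :
    fderiv ℝ (fun r : Fin 6 → ℝ => r i + a * r j) q
      = (ContinuousLinearMap.proj i + a • ContinuousLinearMap.proj j) := by
  have : (fun r : Fin 6 → ℝ => r i + a * r j)
      = ⇑((ContinuousLinearMap.proj i + a • ContinuousLinearMap.proj j :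
          (Fin 6 → ℝ) →L[ℝ] ℝ)) := by
    funext r
    simp [ContinuousLinearMap.proj]
  rw [this]
  exact ContinuousLinearMap.fderiv _

set_option maxRecDepth 16000 in
set_option maxHeartbeats 4000000 in
/-- For the `x`-coupled dyad of Rössler systems, the observability determinant of
`Φ = (y₁, L_F y₁, L_F² y₁, y₂, L_F y₂, L_F² y₂)` equals `1` everywhere: the dyad is
fully observable from measuring `y` at each node, independently of `ρ`. -/
theorem dyadX_obsDet_y3y3 (a b c ρ : ℝ) (p : Fin 6 → ℝ) :
    obsDet (PhiY3Y3 (dyadX a b c ρ)) p = 1 := by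
  have hΦ : PhiY3Y3 (dyadX a b c ρ)
      = ⇑((Matrix.toLin' (Mx a ρ)).toContinuousLinearMap) := by
    funext q i
    fin_cases i <;>
      simp [PhiY3Y3, lieD, lieD1_y1, lieD1_y2, fderiv_proj, fderiv_comb, dyadX,
        Matrix.toLin'_apply, Mx, Matrix.mulVec, dotProduct, Fin.sum_univ_six,
        Matrix.cons_val_succ, Matrix.cons_val_zero,
        ContinuousLinearMap.proj] <;> ring
  rw [obsDet, hΦ, ContinuousLinearMap.fderiv]
  have : ((Matrix.toLin' (Mx a ρ)).toContinuousLinearMap).toLinearMap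
      = Matrix.toLin' (Mx a ρ) := rfl
  rw [this, LinearMap.det_toLin']
  simp [Mx, Matrix.det_succ_row_zero, Fin.sum_univ_succ]
  norm_num [Fin.succAbove, Fin.lt_def]
  simp [Matrix.cons_val]
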